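/- If A is the incidence matrix of a finite projective plane of order n, then det(A)² = (n+1)² · n^{n²+n}. -/

import Mathlib

open Matrix

/-- det of (n • 1 + all-ones) over ℚ, for the relevant size. -/
lemma det_smul_one_add_ones (n : ℕ) :
    ((n : ℚ) • (1 : Matrix (Fin (n ^ 2 + n + 1)) (Fin (n ^ 2 + n + 1)) ℚ) +
        Matrix.of (fun _ _ => 1)).det
      = ((n : ℚ) + 1) ^ 2 * (n : ℚ) ^ (n ^ 2 + n) := by
  rcases Nat.eq_zero_or_pos n with rfl | hn
  · haveI : Unique (Fin (0 ^ 2 + 0 + 1)) := Fin.instUnique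
    rw [Matrix.det_unique]
    norm_num
  · have hn0 : (n : ℚ) ≠ 0 := by exact_mod_cast hn.ne'
    have hfact : (n : ℚ) • (1 : Matrix (Fin (n ^ 2 + n + 1)) (Fin (n ^ 2 + n + 1)) ℚ) +
        Matrix.of (fun _ _ => 1)
        = (n : ℚ) • ((1 : Matrix (Fin (n ^ 2 + n + 1)) (Fin (n ^ 2 + n + 1)) ℚ) +
            (replicateCol Unit (fun _ : Fin (n ^ 2 + n + 1) => (n : ℚ)⁻¹)) * (replicateRow Unit (fun _ : Fin (n ^ 2 + n + 1) => (1 : ℚ)))) := by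
      ext i j
      simp [Matrix.mul_apply, Matrix.replicateCol, Matrix.replicateRow, Matrix.one_apply, mul_inv_cancel₀ hn0,
        mul_add, apply_ite]
    rw [hfact, Matrix.det_smul, Matrix.det_one_add_replicateCol_mul_replicateRow]
    simp only [dotProduct, Finset.sum_const, Finset.card_univ, Fintype.card_fin,
      nsmul_eq_mul, smul_eq_mul, Fintype.card_fin]
    have hN : ((n ^ 2 + n + 1 : ℕ) : ℚ) = (n : ℚ) ^ 2 + n + 1 := by push_cast; ring
    rw [hN]
    have hpow : (n : ℚ) ^ (n ^ 2 + n + 1) = (n : ℚ) ^ (n ^ 2 + n) * n := by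
      rw [pow_succ]
    rw [hpow]
    field_simp
    ring

/-- If `A` is the {0,1} incidence matrix of a finite projective plane of order `n`
(each line has `n+1` points, two distinct lines meet in exactly one point), then
`det(A)² = (n+1)² · n^(n²+n)`. -/
theorem det_sq_incidence_matrix
    (n : ℕ) (A : Matrix (Fin (n ^ 2 + n + 1)) (Fin (n ^ 2 + n + 1)) ℤ)
    (h01 : ∀ i j, A i j = 0 ∨ A i j = 1)
    (hrow : ∀ i, ∑ j, A i j = n + 1)
    (hmeet : ∀ i i', i ≠ i' → ∑ j, A i j * A i' j = 1) :
    A.det ^ 2 = ((n : ℤ) + 1) ^ 2 * (n : ℤ) ^ (n ^ 2 + n) := by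
  have key : A * Aᵀ = (n : ℤ) • 1 + Matrix.of (fun _ _ => 1) := by
    ext i i'
    simp only [Matrix.mul_apply, Matrix.transpose_apply, Matrix.add_apply, Matrix.smul_apply,
      Matrix.of_apply, smul_eq_mul]
    rcases eq_or_ne i i' with rfl | h
    · rw [Matrix.one_apply_eq, mul_one]
      have hsq : ∀ j, A i j * A i j = A i j := fun j => by
        rcases h01 i j with h | h <;> simp [h]
      rw [Finset.sum_congr rfl (fun j _ => hsq j), hrow i]
    · rw [Matrix.one_apply_ne h, mul_zero, zero_add, hmeet i i' h]
  have hdet : A.det ^ 2 = ((n : ℤ) • (1 : Matrix (Fin (n ^ 2 + n + 1)) (Fin (n ^ 2 + n + 1)) ℤ) + Matrix.of (fun _ _ => 1)).det := by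
    rw [← key, Matrix.det_mul, Matrix.det_transpose, sq]
  rw [hdet]
  have hinj : Function.Injective ((↑) : ℤ → ℚ) := Int.cast_injective
  apply hinj
  push_cast
  have hmap : (Int.castRingHom ℚ).mapMatrix
      ((n : ℤ) • (1 : Matrix (Fin (n ^ 2 + n + 1)) (Fin (n ^ 2 + n + 1)) ℤ) +
        Matrix.of (fun _ _ => 1))
      = (n : ℚ) • (1 : Matrix (Fin (n ^ 2 + n + 1)) (Fin (n ^ 2 + n + 1)) ℚ) +
        Matrix.of (fun _ _ => 1) := by
    ext i j
    by_cases h : i = j <;> simp [h, Matrix.one_apply, Matrix.smul_apply, smul_eq_mul,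
      ← Matrix.diagonal_natCast, Matrix.diagonal_apply]
  exact (congrArg Matrix.det hmap).trans (det_smul_one_add_ones n)
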